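/- Let μ be the distribution of the infinite-dimensional white noise ξ = Σ_{k∈ℕ} ξ_k f_k in the space 𝔊, and μ^{(n)} the distribution of the truncation ξ^{(n)} = Σ_{k=0}^n ξ_k f_k. Then the 2-Wasserstein distance satisfies 𝔚₂(μ^{(n)}, μ) ≤ 1/√n for every n ∈ ℕ*. -/

import Mathlib

open MeasureTheory ProbabilityTheory Filter

/-- The standard complex Gaussian distribution: the law of `(x+iy)/√2` for `x, y`
independent real standard Gaussians. -/
noncomputable def stdComplexGaussian : Measure ℂ :=
  ((gaussianReal 0 1).prod (gaussianReal 0 1)).map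
    (fun p : ℝ × ℝ => ((p.1 : ℂ) + p.2 * Complex.I) / Real.sqrt 2)

/-- The 2-Wasserstein-Kantorovich distance between two measures on a normed space:
infimum over couplings of the `L²` transport cost. -/
noncomputable def wasserstein2 {E : Type*} [NormedAddCommGroup E] [MeasurableSpace E]
    (ν₁ ν₂ : Measure E) : ENNReal :=
  ⨅ (κ : Measure (E × E)) (_ : κ.map Prod.fst = ν₁) (_ : κ.map Prod.snd = ν₂),
    (∫⁻ p : E × E, ENNReal.ofReal (‖p.1 - p.2‖ ^ 2) ∂κ) ^ (1 / 2 : ℝ)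

/-! Running the truncation and the limit on the same noise couples the two laws, so
`𝔚₂(μ⁽ⁿ⁾, μ)² ≤ 𝔼‖ξ - ξ⁽ⁿ⁾‖²`. By Fatou this is at most the limit in `m` of
`𝔼‖Σ_{n<k≤m} ξ_k f_k‖² = Σ_{n<k≤m} ‖f_k‖² = Σ_{n<k≤m} 1/(1+k²)` (Pythagoras and `𝔼|ξ_k|² = 1`),
and `1/(1+k²) ≤ 1/(k-1) - 1/k` telescopes to `1/n`. -/

open Finset

lemma lintegral_sq_gaussianReal (v : NNReal) :
    ∫⁻ x, ENNReal.ofReal (x ^ 2) ∂gaussianReal 0 v = v := by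
  have second_moment : ∫ x, x ^ 2 ∂gaussianReal 0 v = v := by
    simpa using (variance_of_integral_eq_zero aemeasurable_id integral_id_gaussianReal).symm.trans
      (variance_id_gaussianReal (μ := 0) (v := v))
  rw [← ofReal_integral_eq_lintegral_ofReal (f := fun x => x ^ 2)
      (memLp_id_gaussianReal 2).integrable_sq (ae_of_all _ fun x => sq_nonneg x),
    second_moment, ENNReal.ofReal_coe_nnreal]

lemma lintegral_norm_sq_stdComplexGaussian :
    ∫⁻ z, ENNReal.ofReal (‖z‖ ^ 2) ∂stdComplexGaussian = 1 := by
  have norm_sq : ∀ p : ℝ × ℝ,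
      ENNReal.ofReal (‖((p.1 : ℂ) + p.2 * Complex.I) / Real.sqrt 2‖ ^ 2)
        = ENNReal.ofReal (p.1 ^ 2) * 2⁻¹ + ENNReal.ofReal (p.2 ^ 2) * 2⁻¹ := fun p => by
    rw [norm_div, div_pow, Complex.sq_norm, Complex.normSq_add_mul_I, Complex.norm_real,
      Real.norm_eq_abs, sq_abs, Real.sq_sqrt zero_le_two, add_div,
      ENNReal.ofReal_add (by positivity) (by positivity), ENNReal.ofReal_div_of_pos two_pos,
      ENNReal.ofReal_div_of_pos two_pos, ENNReal.ofReal_ofNat, div_eq_mul_inv, div_eq_mul_inv]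
  rw [stdComplexGaussian, lintegral_map (by fun_prop) (by fun_prop), lintegral_congr norm_sq,
    lintegral_add_left (by fun_prop), lintegral_mul_const _ (by fun_prop),
    lintegral_mul_const _ (by fun_prop),
    measurePreserving_fst.lintegral_comp (f := fun x => ENNReal.ofReal (x ^ 2)) (by fun_prop),
    measurePreserving_snd.lintegral_comp (f := fun x => ENNReal.ofReal (x ^ 2)) (by fun_prop),
    lintegral_sq_gaussianReal, ENNReal.coe_one, one_mul, ENNReal.inv_two_add_inv_two]

lemma norm_sum_sq_of_pairwise_inner_eq_zero {𝕜 E ι : Type*} [RCLike 𝕜] [NormedAddCommGroup E]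
    [InnerProductSpace 𝕜 E] {v : ι → E} (hv : Pairwise fun i j => inner 𝕜 (v i) (v j) = 0)
    (s : Finset ι) : ‖∑ i ∈ s, v i‖ ^ 2 = ∑ i ∈ s, ‖v i‖ ^ 2 := by
  classical
  induction s using Finset.induction_on with
  | empty => simp
  | insert a s ha ih =>
    have hperp : inner 𝕜 (v a) (∑ i ∈ s, v i) = 0 :=
      (inner_sum _ _ _).trans <| sum_eq_zero fun i hi => hv (ne_of_mem_of_not_mem hi ha).symm
    rw [sum_insert ha, sum_insert ha, sq,
      norm_add_sq_eq_norm_sq_add_norm_sq_of_inner_eq_zero _ _ hperp, ← sq, ← sq, ih]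

lemma lintegral_le_of_tendsto_of_lintegral_le {α : Type*} [MeasurableSpace α] {μ : Measure α}
    {F : ℕ → α → ENNReal} {G : α → ENNReal} (hF : ∀ m, AEMeasurable (F m) μ)
    (hFG : ∀ᵐ a ∂μ, Tendsto (fun m => F m a) atTop (nhds (G a))) {C : ENNReal}
    (hC : ∀ᶠ m in atTop, ∫⁻ a, F m a ∂μ ≤ C) : ∫⁻ a, G a ∂μ ≤ C := by
  rw [lintegral_congr_ae (hFG.mono fun a ha => ha.liminf_eq.symm)]
  exact (lintegral_liminf_le' hF).trans (liminf_le_of_frequently_le' hC.frequently)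

section RandomSeries

variable {Ω 𝕜 E ι : Type*} [MeasurableSpace Ω] [RCLike 𝕜] [NormedAddCommGroup E]
  [InnerProductSpace 𝕜 E]

lemma measurable_sum_smul [MeasurableSpace E] [BorelSpace E] {ξ : ι → Ω → 𝕜}
    (hξ : ∀ i, Measurable (ξ i)) (v : ι → E) (s : Finset ι) :
    Measurable fun ω => ∑ i ∈ s, ξ i ω • v i := by
  have hcont : Continuous fun c : s → 𝕜 => ∑ i : s, c i • v i := by fun_prop
  have hcoords : Measurable fun ω (i : s) => ξ i ω := measurable_pi_lambda _ fun i => hξ i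
  simp_rw [← sum_coe_sort s]
  exact hcont.measurable.comp hcoords

lemma lintegral_norm_sum_smul_sq {μ : Measure Ω} {ξ : ι → Ω → 𝕜}
    (hξ : ∀ i, Measurable (ξ i))
    (hξ2 : ∀ i, ∫⁻ ω, ENNReal.ofReal (‖ξ i ω‖ ^ 2) ∂μ = 1) {v : ι → E}
    (hv : Pairwise fun i j => inner 𝕜 (v i) (v j) = 0) (s : Finset ι) :
    ∫⁻ ω, ENNReal.ofReal (‖∑ i ∈ s, ξ i ω • v i‖ ^ 2) ∂μ
      = ∑ i ∈ s, ENNReal.ofReal (‖v i‖ ^ 2) := by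
  have hv' : ∀ ω, Pairwise fun i j => inner 𝕜 (ξ i ω • v i) (ξ j ω • v j) = 0 :=
    fun ω i j hij => by simp only [inner_smul_left, inner_smul_right, hv hij, mul_zero]
  simp_rw [norm_sum_sq_of_pairwise_inner_eq_zero (hv' _), norm_smul, mul_pow]
  rw [lintegral_congr fun ω => ENNReal.ofReal_sum_of_nonneg fun i _ => by positivity,
    lintegral_finsetSum _ fun i _ => by fun_prop]
  refine sum_congr rfl fun i _ => ?_
  simp_rw [ENNReal.ofReal_mul (sq_nonneg _)]
  rw [lintegral_mul_const _ (by fun_prop), hξ2, one_mul]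

lemma lintegral_norm_partial_sum_sub_sq_le [MeasurableSpace E] [BorelSpace E] {μ : Measure Ω}
    {ξ : ℕ → Ω → 𝕜} (hξ : ∀ k, Measurable (ξ k))
    (hξ2 : ∀ k, ∫⁻ ω, ENNReal.ofReal (‖ξ k ω‖ ^ 2) ∂μ = 1) {v : ℕ → E}
    (hv : Pairwise fun j k => inner 𝕜 (v j) (v k) = 0) {L : Ω → E}
    (hL : ∀ᵐ ω ∂μ, Tendsto (fun m => ∑ k ∈ range (m + 1), ξ k ω • v k) atTop (nhds (L ω)))
    (n : ℕ) {C : ℝ} (hC : ∀ m, ∑ k ∈ Ioc n m, ‖v k‖ ^ 2 ≤ C) :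
    ∫⁻ ω, ENNReal.ofReal (‖∑ k ∈ range (n + 1), ξ k ω • v k - L ω‖ ^ 2) ∂μ
      ≤ ENNReal.ofReal C := by
  have htail : ∀ m ≥ n, ∀ ω,
      ∑ k ∈ range (m + 1), ξ k ω • v k - ∑ k ∈ range (n + 1), ξ k ω • v k
        = ∑ k ∈ Ioc n m, ξ k ω • v k := fun m hm ω => by
    rw [← sum_Ico_eq_sub _ (by omega : n + 1 ≤ m + 1), Ico_add_one_add_one_eq_Ioc]
  refine lintegral_le_of_tendsto_of_lintegral_le
    (F := fun m ω => ENNReal.ofReal (‖∑ k ∈ Ioc n m, ξ k ω • v k‖ ^ 2))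
    (fun m => ((measurable_sum_smul hξ v _).norm.pow_const 2).ennreal_ofReal.aemeasurable)
    ?_ (Eventually.of_forall fun m => ?_)
  · filter_upwards [hL] with ω hω
    rw [norm_sub_rev]
    refine (ENNReal.tendsto_ofReal ((hω.sub_const _).norm.pow 2)).congr' ?_
    filter_upwards [eventually_ge_atTop n] with m hm
    rw [htail m hm]
  · rw [lintegral_norm_sum_smul_sq hξ hξ2 hv,
      ← ENNReal.ofReal_sum_of_nonneg fun k _ => sq_nonneg _]
    exact ENNReal.ofReal_le_ofReal (hC m)

end RandomSeries

lemma one_div_one_add_sq_le_one_div_sub_one_div {k : ℝ} (hk : 1 ≤ k) :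
    1 / (1 + (k + 1) ^ 2) ≤ 1 / k - 1 / (k + 1) := by
  rw [div_sub_div _ _ (by positivity) (by positivity),
    div_le_div_iff₀ (by positivity) (by positivity)]
  nlinarith

lemma sum_Ioc_one_div_one_add_sq_le {n : ℕ} (hn : 1 ≤ n) (m : ℕ) :
    ∑ k ∈ Ioc n m, 1 / (1 + (k : ℝ) ^ 2) ≤ 1 / (n : ℝ) := by
  suffices telescope :
      ∀ m, n ≤ m → ∑ k ∈ Ioc n m, 1 / (1 + (k : ℝ) ^ 2) ≤ 1 / (n : ℝ) - 1 / m by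
    rcases le_or_gt n m with hnm | hmn
    · exact (telescope m hnm).trans (sub_le_self _ (by positivity))
    · rw [Ioc_eq_empty_of_le hmn.le, sum_empty]
      positivity
  intro m hnm
  induction m, hnm using Nat.le_induction with
  | base => simp
  | succ m hnm ih =>
    have hm : (1 : ℝ) ≤ m := by exact_mod_cast hn.trans hnm
    rw [sum_Ioc_succ_top (by omega), Nat.cast_succ]
    linarith [one_div_one_add_sq_le_one_div_sub_one_div hm]

lemma wasserstein2_map_le {Ω E : Type*} [MeasurableSpace Ω] [NormedAddCommGroup E]
    [MeasurableSpace E] (μ : Measure Ω) {X Y : Ω → E} (hX : Measurable X) (hY : Measurable Y) :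
    wasserstein2 (μ.map X) (μ.map Y)
      ≤ (∫⁻ ω, ENNReal.ofReal (‖X ω - Y ω‖ ^ 2) ∂μ) ^ (1 / 2 : ℝ) := by
  have hXY : Measurable fun ω => (X ω, Y ω) := hX.prodMk hY
  refine iInf_le_of_le (μ.map fun ω => (X ω, Y ω)) <|
    iInf_le_of_le (by rw [Measure.map_map measurable_fst hXY]; rfl) <|
    iInf_le_of_le (by rw [Measure.map_map measurable_snd hXY]; rfl) ?_
  gcongr
  exact lintegral_map_le _ _

theorem wasserstein_truncated_white_noise_general {Ω : Type*} [MeasurableSpace Ω] (μ : Measure Ω)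
    {G : Type*} [NormedAddCommGroup G] [InnerProductSpace ℂ G]
    [MeasurableSpace G] [BorelSpace G]
    (f : ℕ → G)
    (hf : ∀ j k : ℕ, (inner ℂ (f j) (f k) : ℂ)
        = if j = k then ((1 / (1 + (k : ℝ) ^ 2) : ℝ) : ℂ) else 0)
    (ξ : ℕ → Ω → ℂ) (hmeas : ∀ k, Measurable (ξ k))
    (hlaw : ∀ k, μ.map (ξ k) = stdComplexGaussian)
    (ξlim : Ω → G) (hξlim : Measurable ξlim)
    (htendsto : ∀ᵐ ω ∂μ,
      Tendsto (fun n : ℕ => ∑ k ∈ Finset.range (n + 1), ξ k ω • f k) atTop (nhds (ξlim ω))) :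
    ∀ n : ℕ, 1 ≤ n →
      wasserstein2 (μ.map (fun ω => ∑ k ∈ Finset.range (n + 1), ξ k ω • f k)) (μ.map ξlim)
        ≤ ENNReal.ofReal (1 / Real.sqrt n) := by
  intro n hn
  have horth : Pairwise fun j k => inner ℂ (f j) (f k) = 0 := fun j k hjk =>
    (hf j k).trans (if_neg hjk)
  have hnorm : ∀ k : ℕ, ‖f k‖ ^ 2 = 1 / (1 + (k : ℝ) ^ 2) := fun k => by
    have hkk := hf k k
    rw [if_pos rfl, inner_self_eq_norm_sq_to_K, ← RCLike.ofReal_pow] at hkk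
    exact Complex.ofReal_injective hkk
  have hξ2 : ∀ k, ∫⁻ ω, ENNReal.ofReal (‖ξ k ω‖ ^ 2) ∂μ = 1 := fun k => by
    rw [← lintegral_map (f := fun z => ENNReal.ofReal (‖z‖ ^ 2)) (by fun_prop) (hmeas k),
      hlaw k, lintegral_norm_sq_stdComplexGaussian]
  have htail : ∀ m, ∑ k ∈ Ioc n m, ‖f k‖ ^ 2 ≤ 1 / (n : ℝ) := fun m => by
    simpa only [hnorm] using sum_Ioc_one_div_one_add_sq_le hn m
  calc _ ≤ _ := wasserstein2_map_le μ (measurable_sum_smul hmeas f _) hξlim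
    _ ≤ ENNReal.ofReal (1 / n) ^ (1 / 2 : ℝ) := by
      gcongr
      exact lintegral_norm_partial_sum_sub_sq_le hmeas hξ2 horth htendsto n htail
    _ = ENNReal.ofReal (1 / Real.sqrt n) := by
      rw [ENNReal.ofReal_rpow_of_nonneg (by positivity) (by norm_num), ← Real.sqrt_eq_rpow,
        one_div, one_div, Real.sqrt_inv]

/-- with `ξ = Σ_k ξ_k f_k` the white noise in the completion `𝔊` (a Hilbert
space `G` in which the basis `(f_k)` is orthogonal with `⟨f_j,f_k⟩ = δ_{jk}/(1+k²)`), and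
`ξ⁽ⁿ⁾ = Σ_{k=0}^n ξ_k f_k` its truncation, the 2-Wasserstein distance between the laws
satisfies `𝔚₂(μ⁽ⁿ⁾, μ) ≤ 1/√n` for every `n ≥ 1`. -/
theorem wasserstein_truncated_white_noise {Ω : Type*} [MeasurableSpace Ω] (μ : Measure Ω)
    [IsProbabilityMeasure μ]
    {G : Type*} [NormedAddCommGroup G] [InnerProductSpace ℂ G] [CompleteSpace G]
    [MeasurableSpace G] [BorelSpace G]
    (f : ℕ → G)
    (hf : ∀ j k : ℕ, (inner ℂ (f j) (f k) : ℂ)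
        = if j = k then ((1 / (1 + (k : ℝ) ^ 2) : ℝ) : ℂ) else 0)
    (ξ : ℕ → Ω → ℂ) (hmeas : ∀ k, Measurable (ξ k))
    (hindep : iIndepFun ξ μ)
    (hlaw : ∀ k, μ.map (ξ k) = stdComplexGaussian)
    (ξlim : Ω → G) (hξlim : Measurable ξlim)
    (htendsto : ∀ᵐ ω ∂μ,
      Tendsto (fun n : ℕ => ∑ k ∈ Finset.range (n + 1), ξ k ω • f k) atTop (nhds (ξlim ω))) :
    ∀ n : ℕ, 1 ≤ n →
      wasserstein2 (μ.map (fun ω => ∑ k ∈ Finset.range (n + 1), ξ k ω • f k)) (μ.map ξlim)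
        ≤ ENNReal.ofReal (1 / Real.sqrt n) :=
  wasserstein_truncated_white_noise_general μ f hf ξ hmeas hlaw ξlim hξlim htendsto
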